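/- Let g ≥ 2 be an integer and take N = 2 in the definition of Θ. Then for every v ∈ I_2, the function Θ_v is identically zero on ℍ_g, i.e., Θ_v(Z) = 0 for all Z ∈ ℍ_g. -/

import Mathlib

open Complex Matrix

noncomputable section

/-- The Siegel upper half-space: symmetric complex `g × g` matrices with positive
definite imaginary part. -/
def SiegelUpper (g : ℕ) : Set (Matrix (Fin g) (Fin g) ℂ) :=
  {Z | Z.IsSymm ∧ (Matrix.of fun i j => (Z i j).im).PosDef}

/-- Index of the `i`-th coordinate among the first `g` coordinates of `Fin (2*g)`. -/
def idxU {g : ℕ} (i : Fin g) : Fin (2 * g) := ⟨i.1, by have := i.isLt; omega⟩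

/-- Index of the `i`-th coordinate among the last `g` coordinates of `Fin (2*g)`. -/
def idxL {g : ℕ} (i : Fin g) : Fin (2 * g) := ⟨g + i.1, by have := i.isLt; omega⟩

/-- The upper half `v_u` of a `2g`-vector. -/
def vecU {g : ℕ} (v : Fin (2 * g) → ℝ) : Fin g → ℝ := fun i => v (idxU i)

/-- The lower half `v_l` of a `2g`-vector. -/
def vecL {g : ℕ} (v : Fin (2 * g) → ℝ) : Fin g → ℝ := fun i => v (idxL i)

/-- The theta constant `θ_v(Z)`. -/
def thetaConst {g : ℕ} (v : Fin (2 * g) → ℝ) (Z : Matrix (Fin g) (Fin g) ℂ) : ℂ :=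
  ∑' n : Fin g → ℤ,
    Complex.exp (2 * Real.pi * Complex.I *
      ((1 / 2 : ℂ) * ∑ i, ∑ j, (((n i : ℝ) + vecU v i : ℝ) : ℂ) * Z i j *
          (((n j : ℝ) + vecU v j : ℝ) : ℂ)
        + ∑ i, (((n i : ℝ) + vecU v i : ℝ) : ℂ) * ((vecL v i : ℝ) : ℂ)))

/-- The set `S₋` of odd half-integer characteristics. -/
def Sminus (g : ℕ) : Set (Fin (2 * g) → ℝ) :=
  {a | (∀ k, a k = 0 ∨ a k = 1 / 2) ∧
    Complex.exp (4 * Real.pi * Complex.I * ((∑ i, vecU a i * vecL a i : ℝ) : ℂ)) = -1}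

/-- The set `S₊` of even half-integer characteristics. -/
def Splus (g : ℕ) : Set (Fin (2 * g) → ℝ) :=
  {a | ∀ k, a k = 0 ∨ a k = 1 / 2} \ Sminus g

/-- The real vector associated to a rational vector. -/
def ratToReal {g : ℕ} (v : Fin (2 * g) → ℚ) : Fin (2 * g) → ℝ := fun k => (v k : ℝ)

/-- The quotient of theta constants `Θ_v(Z)`. -/
def bigTheta (g N : ℕ) (v : Fin (2 * g) → ℚ) (Z : Matrix (Fin g) (Fin g) ℂ) : ℂ :=
  2 ^ (4 * N) *
    Complex.exp (-2 * Real.pi * Complex.I *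
      (((2 ^ g * N * (2 ^ g - 1) * (2 ^ g + 1) : ℝ) *
        ∑ i, vecU (ratToReal v) i * vecL (ratToReal v) i : ℝ) : ℂ)) *
    (∏ᶠ a ∈ Sminus g, thetaConst (a - ratToReal v) Z ^ (4 * N * (2 ^ g + 1))) /
    ∏ᶠ b ∈ Splus g, thetaConst b Z ^ (4 * N * (2 ^ g - 1))

/-- `v ∈ I_N` : `N` is the smallest positive integer with `N • v` integral. -/
def InIN (g N : ℕ) (v : Fin (2 * g) → ℚ) : Prop :=
  0 < N ∧ (∀ k, ∃ z : ℤ, (N : ℚ) * v k = z) ∧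
    ∀ m : ℕ, 0 < m → (∀ k, ∃ z : ℤ, (m : ℚ) * v k = z) → N ≤ m

/-- Congruence of rational vectors modulo `ℤ^{2g}`. -/
def CongMod (g : ℕ) (v w : Fin (2 * g) → ℚ) : Prop := ∀ k, ∃ z : ℤ, v k - w k = z

/-!
Write `2v ≡ f (mod 2)` with `f = (f_u, f_l) ∈ 𝔽₂^{2g}` and `q(d) = d_u · d_l`. Since `g ≥ 2` there is
a characteristic `d` with `q(d) = 1` and `q(d - f) = 1`: it can be found on two coordinates, one of
them carrying a nonzero entry of `f` when `q(f) = 1`. Then `a = d/2 ∈ S₋` and `a - v` is again an odd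
half-integer characteristic, so `θ_{a-v}` vanishes: the involution `n ↦ -n - 2(a - v)_u` of `ℤ^g`
fixes the quadratic part of the exponent and multiplies each term of the theta series by `-1`.
Hence one factor of the numerator of `Θ_v` is zero.
-/

theorem tsum_eq_zero_of_comp_perm_eq_neg {α E : Type*} [AddCommGroup E] [TopologicalSpace E]
    [IsTopologicalAddGroup E] [T2Space E] [IsAddTorsionFree E] (f : α → E) (e : Equiv.Perm α)
    (h : ∀ n, f (e n) = -f n) : ∑' n, f n = 0 :=
  self_eq_neg.mp <|
    calc ∑' n, f n = ∑' n, f (e n) := (e.tsum_eq f).symm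
      _ = ∑' n, -f n := tsum_congr h
      _ = -∑' n, f n := tsum_neg

theorem Complex.exp_pi_mul_I_mul_of_odd {M : ℤ} (hM : Odd M) : exp (Real.pi * I * M) = -1 := by
  rw [mul_comm, exp_int_mul, exp_pi_mul_I, hM.neg_one_zpow]

def thetaTerm {g : ℕ} (c : Fin (2 * g) → ℝ) (Z : Matrix (Fin g) (Fin g) ℂ) (n : Fin g → ℤ) : ℂ :=
  Complex.exp (2 * Real.pi * Complex.I *
    ((1 / 2 : ℂ) * ∑ i, ∑ j, (((n i : ℝ) + vecU c i : ℝ) : ℂ) * Z i j *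
        (((n j : ℝ) + vecU c j : ℝ) : ℂ)
      + ∑ i, (((n i : ℝ) + vecU c i : ℝ) : ℂ) * ((vecL c i : ℝ) : ℂ)))

theorem thetaConst_eq_tsum_thetaTerm {g : ℕ} (c : Fin (2 * g) → ℝ)
    (Z : Matrix (Fin g) (Fin g) ℂ) : thetaConst c Z = ∑' n, thetaTerm c Z n :=
  rfl

section HalfIntegerCharacteristic

variable {g : ℕ} {c : Fin (2 * g) → ℝ} {p q : Fin g → ℤ}

theorem thetaTerm_neg_sub (hu : ∀ i, vecU c i = p i / 2) (hl : ∀ i, vecL c i = q i / 2)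
    (Z : Matrix (Fin g) (Fin g) ℂ) (n : Fin g → ℤ) :
    thetaTerm c Z (fun i => -n i - p i) =
      thetaTerm c Z n * exp (-(Real.pi * I * ((∑ i, (2 * n i + p i) * q i : ℤ) : ℂ))) := by
  simp only [thetaTerm, ← exp_add, hu, hl]
  congr 1
  push_cast
  have hquad : ∑ i, ∑ j, ((-(n i : ℂ) - p i + p i / 2) * Z i j * (-(n j : ℂ) - p j + p j / 2)) =
      ∑ i, ∑ j, (((n i : ℂ) + p i / 2) * Z i j * ((n j : ℂ) + p j / 2)) :=
    Finset.sum_congr rfl fun i _ => Finset.sum_congr rfl fun j _ => by ring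
  have hlin : ∑ i, ((-(n i : ℂ) - p i + p i / 2) * (q i / 2)) =
      -∑ i, (((n i : ℂ) + p i / 2) * (q i / 2)) := by
    rw [← Finset.sum_neg_distrib]
    exact Finset.sum_congr rfl fun i _ => by ring
  have hK : ∑ i, ((2 * (n i : ℂ) + p i) * q i) = 4 * ∑ i, (((n i : ℂ) + p i / 2) * (q i / 2)) := by
    rw [Finset.mul_sum]
    exact Finset.sum_congr rfl fun i _ => by ring
  rw [hquad, hlin, hK]
  ring

theorem thetaConst_eq_zero_of_odd (hu : ∀ i, vecU c i = p i / 2) (hl : ∀ i, vecL c i = q i / 2)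
    (hodd : Odd (∑ i, p i * q i)) (Z : Matrix (Fin g) (Fin g) ℂ) : thetaConst c Z = 0 := by
  have hinv : Function.Involutive fun (n : Fin g → ℤ) i => -n i - p i := fun n => by
    funext i
    ring
  rw [thetaConst_eq_tsum_thetaTerm]
  refine tsum_eq_zero_of_comp_perm_eq_neg _ (hinv.toPerm _) fun n => ?_
  have hK : Odd (∑ i, (2 * n i + p i) * q i) := by
    have : ∑ i, (2 * n i + p i) * q i = 2 * ∑ i, n i * q i + ∑ i, p i * q i := by
      rw [Finset.mul_sum, ← Finset.sum_add_distrib]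
      exact Finset.sum_congr rfl fun i _ => by ring
    rw [this]
    exact (even_two_mul _).add_odd hodd
  rw [Function.Involutive.coe_toPerm, thetaTerm_neg_sub hu hl, exp_neg,
    exp_pi_mul_I_mul_of_odd hK]
  ring

end HalfIntegerCharacteristic

theorem Sminus_finite (g : ℕ) : (Sminus g).Finite := by
  refine (Set.Finite.pi (t := fun _ : Fin (2 * g) => ({0, 1 / 2} : Set ℝ))
    fun _ => (Set.finite_singleton _).insert _).subset fun a ha => ?_
  simpa [Set.mem_pi] using ha.1

theorem bigTheta_eq_zero_of_thetaConst_eq_zero {g N : ℕ} (hN : N ≠ 0) {v : Fin (2 * g) → ℚ}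
    {Z : Matrix (Fin g) (Fin g) ℂ} {a : Fin (2 * g) → ℝ} (ha : a ∈ Sminus g)
    (h : thetaConst (a - ratToReal v) Z = 0) : bigTheta g N v Z = 0 := by
  have hprod : ∏ᶠ b ∈ Sminus g, thetaConst (b - ratToReal v) Z ^ (4 * N * (2 ^ g + 1)) = 0 := by
    rw [finprod_mem_eq_finite_toFinset_prod _ (Sminus_finite g)]
    refine Finset.prod_eq_zero ((Sminus_finite g).mem_toFinset.mpr ha) ?_
    rw [h, zero_pow (by positivity)]
  rw [bigTheta, hprod, mul_zero, zero_div]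

/- The two-coordinate case of `ZMod.exists_odd_sub_odd`, in the form `q(d) = 1`, `B(d, f) = q(f)`
with `B` the polarisation of `q`; it fails only when `f` vanishes on both coordinates and `q(f) = 1`. -/
theorem ZMod.exists_odd_pair_bilin_eq : ∀ a₀ b₀ a₁ b₁ t : ZMod 2, (t = 1 → a₀ * b₀ ≠ 0) →
    ∃ x₀ y₀ x₁ y₁ : ZMod 2, x₀ * y₀ + x₁ * y₁ = 1 ∧ x₀ * b₀ + a₀ * y₀ + (x₁ * b₁ + a₁ * y₁) = t := by
  decide

theorem ZMod.exists_odd_sub_odd {g : ℕ} (hg : 2 ≤ g) (fu fl : Fin g → ZMod 2) :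
    ∃ du dl : Fin g → ZMod 2, ∑ i, du i * dl i = 1 ∧ ∑ i, (du i - fu i) * (dl i - fl i) = 1 := by
  have : Nontrivial (Fin g) := Fin.nontrivial_iff_two_le.mpr hg
  set t := ∑ i, fu i * fl i
  obtain ⟨i, hi⟩ : ∃ i, t = 1 → fu i * fl i ≠ 0 := by
    by_cases ht : t = 1
    · obtain ⟨i, -, hi⟩ := Finset.exists_ne_zero_of_sum_ne_zero (ht ▸ one_ne_zero : t ≠ 0)
      exact ⟨i, fun _ => hi⟩
    · exact ⟨Classical.arbitrary _, fun h => absurd h ht⟩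
  obtain ⟨j, hji⟩ := exists_ne i
  obtain ⟨x₀, y₀, x₁, y₁, hq, hB⟩ :=
    exists_odd_pair_bilin_eq (fu i) (fl i) (fu j) (fl j) t hi
  refine ⟨Pi.single i x₀ + Pi.single j x₁, Pi.single i y₀ + Pi.single j y₁, ?_, ?_⟩
  · simpa [add_mul, mul_add, Finset.sum_add_distrib, Pi.single_apply, hji, hji.symm] using hq
  · have hexp : ∀ a b c d : ZMod 2, (a - c) * (b - d) = a * b + (a * d + c * b) + c * d := by
      decide
    simp only [hexp, Finset.sum_add_distrib]
    simp only [add_mul, mul_add, Finset.sum_add_distrib, Pi.add_apply, Pi.single_apply,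
      ite_mul, mul_ite, zero_mul, mul_zero, Finset.sum_ite_eq',
      Finset.mem_univ, if_true, hji, hji.symm, if_false, add_zero, zero_add]
    rw [hq, show x₀ * fl i + x₁ * fl j + (fu i * y₀ + fu j * y₁) = t by rw [← hB]; ring]
    rw [add_assoc, CharTwo.add_self_eq_zero, add_zero]

def joinHalves {α : Type*} {g : ℕ} (u l : Fin g → α) : Fin (2 * g) → α :=
  fun k => Fin.append u l (Fin.cast (two_mul g) k)

section Halves

variable {g : ℕ}

@[simp]
theorem vecU_joinHalves (u l : Fin g → ℝ) : vecU (joinHalves u l) = u :=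
  funext (Fin.append_left u l)

@[simp]
theorem vecL_joinHalves (u l : Fin g → ℝ) : vecL (joinHalves u l) = l :=
  funext (Fin.append_right u l)

theorem vecU_sub (a b : Fin (2 * g) → ℝ) : vecU (a - b) = vecU a - vecU b :=
  rfl

theorem vecL_sub (a b : Fin (2 * g) → ℝ) : vecL (a - b) = vecL a - vecL b :=
  rfl

theorem joinHalves_mem {α : Type*} {s : Set α} {u l : Fin g → α} (hu : ∀ i, u i ∈ s)
    (hl : ∀ i, l i ∈ s) (k : Fin (2 * g)) : joinHalves u l k ∈ s :=
  (Fin.forall_fin_add fun k => Fin.append u l k ∈ s).2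
    ⟨fun i => by rw [Fin.append_left]; exact hu i, fun i => by rw [Fin.append_right]; exact hl i⟩ _

end Halves

theorem ZMod.odd_sum_val_mul_val {g : ℕ} {du dl : Fin g → ZMod 2} (h : ∑ i, du i * dl i = 1) :
    Odd (∑ i, ((du i).val : ℤ) * (dl i).val) := by
  rw [← ZMod.intCast_eq_one_iff_odd]
  push_cast [ZMod.natCast_zmod_val]
  exact h

theorem joinHalves_half_val_mem_Sminus {g : ℕ} {du dl : Fin g → ZMod 2}
    (h : ∑ i, du i * dl i = 1) :
    joinHalves (fun i => ((du i).val : ℝ) / 2) (fun i => ((dl i).val : ℝ) / 2) ∈ Sminus g := by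
  have hhalf (x : ZMod 2) : ((x.val : ℝ) / 2) ∈ ({0, 1 / 2} : Set ℝ) := by
    fin_cases x <;> norm_num [ZMod.val]
  refine ⟨joinHalves_mem (fun i => hhalf _) (fun i => hhalf _), ?_⟩
  rw [vecU_joinHalves, vecL_joinHalves]
  convert exp_pi_mul_I_mul_of_odd (ZMod.odd_sum_val_mul_val h) using 2
  push_cast
  rw [Finset.mul_sum, Finset.mul_sum]
  exact Finset.sum_congr rfl fun i _ => by ring

theorem exists_mem_Sminus_thetaConst_sub_eq_zero {g : ℕ} (hg : 2 ≤ g) {v : Fin (2 * g) → ℚ}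
    (hv : ∀ k, ∃ z : ℤ, (2 : ℚ) * v k = z) (Z : Matrix (Fin g) (Fin g) ℂ) :
    ∃ a ∈ Sminus g, thetaConst (a - ratToReal v) Z = 0 := by
  choose z hz using hv
  have hvz (k : Fin (2 * g)) : ratToReal v k = z k / 2 := by
    have := congrArg (Rat.cast : ℚ → ℝ) (hz k)
    push_cast at this
    simp only [ratToReal]
    linarith
  obtain ⟨du, dl, hodd, hsub⟩ :=
    ZMod.exists_odd_sub_odd hg (fun i => z (idxU i)) (fun i => z (idxL i))
  refine ⟨_, joinHalves_half_val_mem_Sminus hodd,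
    thetaConst_eq_zero_of_odd (p := fun i => (du i).val - z (idxU i))
      (q := fun i => (dl i).val - z (idxL i)) (fun i => ?_) (fun i => ?_) ?_ Z⟩
  · rw [vecU_sub, Pi.sub_apply, vecU_joinHalves]
    simp only [vecU, hvz]
    push_cast
    ring
  · rw [vecL_sub, Pi.sub_apply, vecL_joinHalves]
    simp only [vecL, hvz]
    push_cast
    ring
  · rw [← ZMod.intCast_eq_one_iff_odd]
    push_cast [ZMod.natCast_zmod_val]
    exact hsub

theorem statement14 (g : ℕ) (hg : 2 ≤ g) (v : Fin (2 * g) → ℚ) (hv : InIN g 2 v) :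
    ∀ Z ∈ SiegelUpper g, bigTheta g 2 v Z = 0 := by
  intro Z _
  obtain ⟨a, ha, hθ⟩ := exists_mem_Sminus_thetaConst_sub_eq_zero hg (by exact_mod_cast hv.2.1) Z
  exact bigTheta_eq_zero_of_thetaConst_eq_zero two_ne_zero ha hθ
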